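/- Let X be a subshift of finite type and φ ∈ End(X, σ) of infinite order in End(X, σ)/⟨σ⟩. Then for all sufficiently large n, I(-n, φ) = [-W^+(n,φ), -W^-(n,φ)] is the unique minimal interval that φ^n-codes {0}. -/

import Mathlib

open Filter Topology

/-- The left shift on bi-infinite sequences. -/
def shift {A : Type*} (x : ℤ → A) : ℤ → A := fun n => x (n + 1)

/-- The shift by `k` places (`σ^k`). -/
def zshift {A : Type*} (k : ℤ) (x : ℤ → A) : ℤ → A := fun n => x (n + k)

/-- A subshift: a closed, shift-invariant subset of `Σ^ℤ`. -/
def IsSubshift {A : Type*} [TopologicalSpace A] (X : Set (ℤ → A)) : Prop :=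
  IsClosed X ∧ shift '' X = X

/-- An endomorphism of the subshift `X`: a continuous shift-commuting surjection of `X`. -/
structure IsEndo {A : Type*} [TopologicalSpace A] (X : Set (ℤ → A))
    (φ : (ℤ → A) → (ℤ → A)) : Prop where
  maps : Set.MapsTo φ X X
  surj : Set.SurjOn φ X X
  cont : ContinuousOn φ X
  comm : ∀ x ∈ X, φ (shift x) = shift (φ x)

/-- `S` φ-codes `T`: agreement of two points of `X` on `S` forces agreement of their
φ-images on `T`. -/
def Codes {A : Type*} (X : Set (ℤ → A)) (φ : (ℤ → A) → (ℤ → A)) (S T : Set ℤ) : Prop :=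
  ∀ x ∈ X, ∀ y ∈ X, (∀ i ∈ S, x i = y i) → ∀ j ∈ T, φ x j = φ y j

/-- The set of integers `W` such that `[0,∞)` φⁿ-codes `[W,∞)`; `W⁺(n,φ)` is its
least element. -/
def WplusSet {A : Type*} (X : Set (ℤ → A)) (φ : (ℤ → A) → (ℤ → A)) (n : ℕ) : Set ℤ :=
  {W | Codes X (φ^[n]) (Set.Ici 0) (Set.Ici W)}

/-- The set of integers `W` such that `(-∞,0]` φⁿ-codes `(-∞,W]`; `W⁻(n,φ)` is its
greatest element. -/
def WminusSet {A : Type*} (X : Set (ℤ → A)) (φ : (ℤ → A) → (ℤ → A)) (n : ℕ) : Set ℤ :=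
  {W | Codes X (φ^[n]) (Set.Iic 0) (Set.Iic W)}

/-- A subshift of finite type: defined by a finite set of excluded words. -/
def IsSFT {A : Type*} (X : Set (ℤ → A)) : Prop :=
  ∃ F : Set (List A), F.Finite ∧
    ∀ x : ℤ → A, x ∈ X ↔ ∀ (n : ℤ), ∀ w ∈ F, ∃ i : Fin w.length, x (n + i) ≠ w.get i


/-!
If `I(-n, φ)` stayed narrower than some fixed width `c` along infinitely many `n`, then each such
`φⁿ` would be a sliding block code with a window of `c + 1` symbols; there are only finitely many
such local rules, so two iterates `φ^m₁`, `φ^m₂` (`m₁ < m₂`) would agree up to a shift, and the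
surjectivity of `φ^m₁` would make `φ^(m₂ - m₁)` a power of `σ`. Hence the width tends to infinity.
Once the width exceeds the memory of the SFT, two points agreeing on `I(-n, φ)` can be spliced
there into a point agreeing with the first on `(-∞, -W⁻]` and with the second on `[-W⁺, ∞)`, so
`I(-n, φ)` codes `{0}`. Minimality is a translation argument: an interval `[a, b]` coding `{0}`
makes `[0, ∞)` code `[-a, ∞)` and `(-∞, 0]` code `(-∞, -b]`.
-/

open Set Filter

section

variable {A : Type*}

lemma shift_injective : Function.Injective (shift : (ℤ → A) → ℤ → A) := by
  intro x y h
  funext n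
  simpa [shift] using congrFun h (n - 1)

lemma zshift_zero (x : ℤ → A) : zshift 0 x = x := by
  funext n; simp [zshift]

lemma shift_zshift (k : ℤ) (x : ℤ → A) : shift (zshift k x) = zshift (k + 1) x := by
  funext n; simp only [shift, zshift]; ring_nf

lemma zshift_apply_zero (k : ℤ) (x : ℤ → A) : zshift k x 0 = x k := by
  simp [zshift]

lemma Codes.mono {X : Set (ℤ → A)} {ψ : (ℤ → A) → (ℤ → A)} {S S' T T' : Set ℤ}
    (h : Codes X ψ S T) (hS : S ⊆ S') (hT : T' ⊆ T) : Codes X ψ S' T' :=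
  fun x hx y hy hxy j hj => h x hx y hy (fun i hi => hxy i (hS hi)) j (hT hj)

section Subshift

variable [TopologicalSpace A] {X : Set (ℤ → A)} {φ ψ : (ℤ → A) → (ℤ → A)}

lemma IsSubshift.shift_mem_iff (hX : IsSubshift X) {x : ℤ → A} : shift x ∈ X ↔ x ∈ X := by
  conv_lhs => rw [← hX.2]
  exact shift_injective.mem_set_image

lemma IsSubshift.zshift_mem_iff (hX : IsSubshift X) (k : ℤ) {x : ℤ → A} :
    zshift k x ∈ X ↔ x ∈ X := by
  induction k using Int.induction_on with
  | zero => rw [zshift_zero]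
  | succ n ih => rw [← shift_zshift, hX.shift_mem_iff, ih]
  | pred n ih => rw [← hX.shift_mem_iff, shift_zshift, sub_add_cancel, ih]

lemma IsEndo.map_zshift (hX : IsSubshift X) (hφ : IsEndo X φ) (k : ℤ) {x : ℤ → A}
    (hx : x ∈ X) : φ (zshift k x) = zshift k (φ x) := by
  induction k using Int.induction_on with
  | zero => simp only [zshift_zero]
  | succ n ih =>
    rw [← shift_zshift, hφ.comm _ ((hX.zshift_mem_iff n).2 hx), ih, shift_zshift]
  | pred n ih =>
    apply shift_injective
    rw [← hφ.comm _ ((hX.zshift_mem_iff _).2 hx), shift_zshift, shift_zshift, sub_add_cancel, ih]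

lemma IsEndo.iterate (hφ : IsEndo X φ) (n : ℕ) : IsEndo X φ^[n] where
  maps := hφ.maps.iterate n
  surj := hφ.surj.iterate n
  cont := hφ.cont.iterate hφ.maps n
  comm := by
    induction n with
    | zero => simp
    | succ n ih =>
      intro x hx
      rw [Function.iterate_succ_apply, Function.iterate_succ_apply, hφ.comm x hx, ih _ (hφ.maps hx)]

lemma Codes.translate (hX : IsSubshift X) (hψ : IsEndo X ψ) {S T : Set ℤ} (h : Codes X ψ S T)
    (k : ℤ) : Codes X ψ ((· - k) ⁻¹' S) ((· - k) ⁻¹' T) := by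
  intro x hx y hy hxy j hj
  have := h _ ((hX.zshift_mem_iff k).2 hx) _ ((hX.zshift_mem_iff k).2 hy)
    (fun i hi => hxy (i + k) (by simpa using hi)) (j - k) hj
  rw [hψ.map_zshift hX k hx, hψ.map_zshift hX k hy] at this
  simpa [zshift] using this

lemma codes_Ici_neg_of_mem_WplusSet (hX : IsSubshift X) (hφ : IsEndo X φ) {n : ℕ} {W : ℤ}
    (hW : W ∈ WplusSet X φ n) : Codes X φ^[n] (Ici (-W)) {0} :=
  (Codes.translate hX (hφ.iterate n) hW (-W)).mono (by simp) (by simp)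

lemma codes_Iic_neg_of_mem_WminusSet (hX : IsSubshift X) (hφ : IsEndo X φ) {n : ℕ} {W : ℤ}
    (hW : W ∈ WminusSet X φ n) : Codes X φ^[n] (Iic (-W)) {0} :=
  (Codes.translate hX (hφ.iterate n) hW (-W)).mono (by simp) (by simp)

lemma neg_mem_WplusSet_of_codes_Icc (hX : IsSubshift X) (hφ : IsEndo X φ) {n : ℕ} {a b : ℤ}
    (h : Codes X φ^[n] (Icc a b) {0}) : -a ∈ WplusSet X φ n := by
  intro x hx y hy hxy j (hj : -a ≤ j)
  refine (h.translate hX (hφ.iterate n) j) x hx y hy (fun i hi => hxy i ?_) j (by simp)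
  simp only [mem_preimage, mem_Icc] at hi
  exact mem_Ici.2 (by omega)

lemma neg_mem_WminusSet_of_codes_Icc (hX : IsSubshift X) (hφ : IsEndo X φ) {n : ℕ} {a b : ℤ}
    (h : Codes X φ^[n] (Icc a b) {0}) : -b ∈ WminusSet X φ n := by
  intro x hx y hy hxy j (hj : j ≤ -b)
  refine (h.translate hX (hφ.iterate n) j) x hx y hy (fun i hi => hxy i ?_) j (by simp)
  simp only [mem_preimage, mem_Icc] at hi
  exact mem_Iic.2 (by omega)

end Subshift

section Splice

variable {X : Set (ℤ → A)} {ψ : (ℤ → A) → (ℤ → A)}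

def splice (b : ℤ) (x y : ℤ → A) : ℤ → A := fun i => if i ≤ b then x i else y i

def HasMemory (X : Set (ℤ → A)) (c : ℕ) : Prop :=
  ∀ x ∈ X, ∀ y ∈ X, ∀ b : ℤ, (∀ i ∈ Icc (b - c) b, x i = y i) → splice b x y ∈ X

lemma IsSFT.exists_hasMemory (hX : IsSFT X) : ∃ c, HasMemory X c := by
  obtain ⟨F, hF, hmem⟩ := hX
  obtain ⟨c, hc⟩ := (hF.image List.length).bddAbove
  refine ⟨c, fun x hx y hy b hxy => (hmem _).2 fun n w hw => ?_⟩
  have hwc : w.length ≤ c := hc (mem_image_of_mem _ hw)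
  by_cases hleft : n + w.length ≤ b + 1
  · obtain ⟨i, hi⟩ := (hmem x).1 hx n w hw
    refine ⟨i, ?_⟩
    rwa [splice, if_pos (by omega)]
  · obtain ⟨i, hi⟩ := (hmem y).1 hy n w hw
    refine ⟨i, ?_⟩
    simp only [splice]
    split_ifs with hib
    · rwa [hxy _ ⟨by omega, hib⟩]
    · exact hi

lemma Codes.Icc_of_hasMemory {c : ℕ} (hc : HasMemory X c) {a b : ℤ} {T : Set ℤ}
    (hright : Codes X ψ (Ici a) T) (hleft : Codes X ψ (Iic b) T) (hab : a + c ≤ b) :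
    Codes X ψ (Icc a b) T := by
  intro x hx y hy hxy j hj
  have hz := hc x hx y hy b fun i hi => hxy i ⟨by linarith [hi.1], hi.2⟩
  refine (hleft x hx _ hz (fun i hi => ?_) j hj).trans (hright _ hz y hy (fun i hi => ?_) j hj)
  · rw [splice, if_pos (mem_Iic.1 hi)]
  · simp only [splice]
    split_ifs with hib
    · exact hxy i ⟨hi, hib⟩
    · rfl

end Splice

section FiniteWindow

variable [TopologicalSpace A] {X : Set (ℤ → A)} {φ ψ ψ' : (ℤ → A) → (ℤ → A)}

/-- The local rule of `ψ` on the window `[a, a + c]`, encoded by its graph so that no default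
value is needed for window contents that do not occur in `X`. -/
def windowGraph (X : Set (ℤ → A)) (ψ : (ℤ → A) → (ℤ → A)) (a : ℤ) (c : ℕ) :
    Set ((Icc (0 : ℤ) c → A) × A) :=
  (fun z => (fun i => z (a + i), ψ z 0)) '' X

lemma eq_zshift_of_windowGraph_eq (hX : IsSubshift X) (hψ : IsEndo X ψ) (hψ' : IsEndo X ψ')
    {a a' : ℤ} {c : ℕ} (hcode : Codes X ψ' (Icc a' (a' + c)) {0})
    (hgraph : windowGraph X ψ a c = windowGraph X ψ' a' c) {x : ℤ → A} (hx : x ∈ X) :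
    ψ x = zshift (a - a') (ψ' x) := by
  have hzero : ∀ x ∈ X, ψ x 0 = ψ' x (a - a') := by
    intro x hx
    obtain ⟨z, hz, hzx⟩ : (fun i : Icc (0 : ℤ) c => x (a + i), ψ x 0) ∈ windowGraph X ψ' a' c :=
      hgraph ▸ mem_image_of_mem _ hx
    simp only [Prod.mk.injEq] at hzx
    rw [← hzx.2, hcode z hz _ ((hX.zshift_mem_iff (a - a')).2 hx) (fun i hi => ?_) 0 rfl,
      hψ'.map_zshift hX _ hx, zshift_apply_zero]
    have := congrFun hzx.1 ⟨i - a', by simp only [mem_Icc] at hi ⊢; omega⟩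
    simp only [add_sub_cancel] at this
    rw [this, zshift]
    ring_nf
  funext j
  have := hzero _ ((hX.zshift_mem_iff j).2 hx)
  rw [hψ.map_zshift hX j hx, hψ'.map_zshift hX j hx, zshift_apply_zero] at this
  rw [zshift, this, zshift, add_comm]

lemma exists_iterate_eq_zshift_of_frequently_codes (hX : IsSubshift X) (hφ : IsEndo X φ)
    [Finite A] (c : ℕ) (a : ℕ → ℤ)
    (h : ∃ᶠ n in atTop, Codes X φ^[n] (Icc (a n) (a n + c)) {0}) :
    ∃ m : ℕ, 1 ≤ m ∧ ∃ k : ℤ, ∀ x ∈ X, φ^[m] x = zshift k x := by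
  obtain ⟨m₁, hm₁, m₂, -, hlt, hgraph⟩ :=
    (Nat.frequently_atTop_iff_infinite.1 h).exists_lt_map_eq_of_mapsTo
      (f := fun n => windowGraph X φ^[n] (a n) c) (mapsTo_univ _ _) finite_univ
  refine ⟨m₂ - m₁, by omega, a m₂ - a m₁, fun y hy => ?_⟩
  obtain ⟨x, hx, rfl⟩ := (hφ.iterate m₁).surj hy
  rw [← Function.iterate_add_apply, Nat.sub_add_cancel hlt.le]
  exact eq_zshift_of_windowGraph_eq hX (hφ.iterate m₂) (hφ.iterate m₁) hm₁ hgraph.symm hx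

end FiniteWindow

end

theorem unique_minimal_coding_interval_general {A : Type*} [Fintype A] [TopologicalSpace A]
    (X : Set (ℤ → A)) (hX : IsSubshift X) (hSFT : IsSFT X)
    (φ : (ℤ → A) → (ℤ → A)) (hφ : IsEndo X φ)
    (hord : ¬ ∃ m : ℕ, 1 ≤ m ∧ ∃ k : ℤ, ∀ x ∈ X, φ^[m] x = zshift k x)
    (Wp Wm : ℕ → ℤ)
    (hWp : ∀ n, IsLeast (WplusSet X φ n) (Wp n))
    (hWm : ∀ n, IsGreatest (WminusSet X φ n) (Wm n)) :
    ∃ n₀ : ℕ, ∀ n : ℕ, n₀ ≤ n →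
      Codes X (φ^[n]) (Set.Icc (-(Wp n)) (-(Wm n))) {0} ∧
      ∀ a b : ℤ, Codes X (φ^[n]) (Set.Icc a b) {0} →
        Set.Icc (-(Wp n)) (-(Wm n)) ⊆ Set.Icc a b := by
  obtain ⟨c, hc⟩ := hSFT.exists_hasMemory
  have hright n : Codes X φ^[n] (Ici (-Wp n)) {0} := codes_Ici_neg_of_mem_WplusSet hX hφ (hWp n).1
  have hleft n : Codes X φ^[n] (Iic (-Wm n)) {0} := codes_Iic_neg_of_mem_WminusSet hX hφ (hWm n).1
  have hwide : ∀ᶠ n in atTop, (c : ℤ) ≤ Wp n - Wm n := by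
    by_contra hnarrow
    rw [not_eventually] at hnarrow
    refine hord (exists_iterate_eq_zshift_of_frequently_codes hX hφ c (fun n => -Wp n)
      (hnarrow.mono fun n hn => (hright n).Icc_of_hasMemory hc ?_ le_rfl))
    exact (hleft n).mono (Iic_subset_Iic.2 (by omega)) subset_rfl
  obtain ⟨n₀, hn₀⟩ := eventually_atTop.1 hwide
  refine ⟨n₀, fun n hn => ⟨(hright n).Icc_of_hasMemory hc (hleft n) (by linarith [hn₀ n hn]),
    fun a b hab => Icc_subset_Icc ?_ ?_⟩⟩
  · linarith [(hWp n).2 (neg_mem_WplusSet_of_codes_Icc hX hφ hab)]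
  · linarith [(hWm n).2 (neg_mem_WminusSet_of_codes_Icc hX hφ hab)]

/-- For an SFT and `φ` of infinite order in `End(X,σ)/⟨σ⟩`, for all large `n` the
interval `I(-n,φ) = [-W⁺(n), -W⁻(n)]` is the unique minimal interval φⁿ-coding `{0}`. -/
theorem unique_minimal_coding_interval {A : Type*} [Fintype A] [TopologicalSpace A]
    [DiscreteTopology A] (X : Set (ℤ → A)) (hX : IsSubshift X) (hSFT : IsSFT X)
    (hinf : X.Infinite)
    (φ : (ℤ → A) → (ℤ → A)) (hφ : IsEndo X φ)
    (hord : ¬ ∃ m : ℕ, 1 ≤ m ∧ ∃ k : ℤ, ∀ x ∈ X, φ^[m] x = zshift k x)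
    (Wp Wm : ℕ → ℤ)
    (hWp : ∀ n, IsLeast (WplusSet X φ n) (Wp n))
    (hWm : ∀ n, IsGreatest (WminusSet X φ n) (Wm n)) :
    ∃ n₀ : ℕ, ∀ n : ℕ, n₀ ≤ n →
      Codes X (φ^[n]) (Set.Icc (-(Wp n)) (-(Wm n))) {0} ∧
      ∀ a b : ℤ, Codes X (φ^[n]) (Set.Icc a b) {0} →
        Set.Icc (-(Wp n)) (-(Wm n)) ⊆ Set.Icc a b :=
  unique_minimal_coding_interval_general X hX hSFT φ hφ hord Wp Wm hWp hWm
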